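/- Let m ≥ 1 be an integer and c ∈ ℂ with c ≠ 0. For g := X₂³ + X₃⁴ + c·X₁^m ∈ MvPolynomial (Fin 3) ℂ (the blow-E₆ model of blow-order m), the Milnor algebra MvPolynomial (Fin 3) ℂ / J(g) is a ℂ-vector space of dimension 6·(m−1). -/

import Mathlib

/-!
The partial derivatives of `g` are nonzero constant multiples of `X₁^(m-1)`, `X₂²`, `X₃³`, so `J(g)`
is the monomial ideal generated by these pure powers. For a monomial ideal generated by pure powers
`Xᵢ^aᵢ`, the polynomials supported on the box `{d | d < a}` form a linear complement, so the
monomials in the box are a basis of the quotient, whose dimension is `∏ aᵢ = 6·(m-1)`.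
-/

open MvPolynomial

/-- The Jacobian ideal of `g`, generated by its partial derivatives. -/
noncomputable def jacobianIdeal (g : MvPolynomial (Fin 3) ℂ) :
    Ideal (MvPolynomial (Fin 3) ℂ) :=
  Ideal.span (Set.range fun i : Fin 3 => pderiv i g)

namespace MvPolynomial

variable {σ R : Type*}

def exponentsBelow (a : σ → ℕ) : Set (σ →₀ ℕ) := {d | ∀ i, d i < a i}

noncomputable def exponentsBelowEquivPi [Finite σ] (a : σ → ℕ) :
    exponentsBelow a ≃ ((i : σ) → Fin (a i)) where
  toFun d i := ⟨d.1 i, d.2 i⟩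
  invFun f := ⟨Finsupp.equivFunOnFinite.symm fun i => f i, fun i => (f i).2⟩
  left_inv d := by ext; simp
  right_inv f := by ext; simp

section CommSemiring

variable [CommSemiring R]

theorem isCompl_restrictSupport_compl (s : Set (σ →₀ ℕ)) :
    IsCompl (restrictSupport R sᶜ) (restrictSupport R s) := by
  constructor
  · rw [Submodule.disjoint_def]
    intro p h₁ h₂
    rw [mem_restrictSupport_iff] at h₁ h₂
    rw [← support_eq_empty, ← Finset.coe_eq_empty]
    exact Set.subset_empty_iff.1 fun d hd => h₁ hd (h₂ hd)
  · rw [codisjoint_iff, restrictSupport_eq_span, restrictSupport_eq_span, ← Submodule.span_union,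
      ← Set.image_union, Set.compl_union_self, ← restrictSupport_eq_span, restrictSupport_univ]

theorem mem_span_X_pow_iff (a : σ → ℕ) {p : MvPolynomial σ R} :
    p ∈ Ideal.span (Set.range fun i => (X i ^ a i : MvPolynomial σ R)) ↔
      ↑p.support ⊆ (exponentsBelow a)ᶜ := by
  have hmonomial : (Set.range fun i => (X i ^ a i : MvPolynomial σ R)) =
      (fun d => monomial d 1) '' Set.range fun i => Finsupp.single i (a i) := by
    rw [← Set.range_comp]
    simp [Function.comp_def, X_pow_eq_monomial]
  rw [hmonomial, mem_ideal_span_monomial_image]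
  simp [Set.subset_def, exponentsBelow, Finsupp.single_le_iff]

end CommSemiring

section CommRing

variable [CommRing R]

noncomputable def quotientSpanXPowEquiv (a : σ → ℕ) :
    (MvPolynomial σ R ⧸ Ideal.span (Set.range fun i => (X i ^ a i : MvPolynomial σ R))) ≃ₗ[R]
      restrictSupport R (exponentsBelow a) :=
  (Submodule.Quotient.restrictScalarsEquiv R _).symm ≪≫ₗ
    Submodule.quotEquivOfEq _ (restrictSupport R (exponentsBelow a)ᶜ)
      (by ext; exact mem_span_X_pow_iff a) ≪≫ₗ
    Submodule.quotientEquivOfIsCompl _ _ (isCompl_restrictSupport_compl _)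

noncomputable def basisQuotientSpanXPow (a : σ → ℕ) : Module.Basis (exponentsBelow a) R
    (MvPolynomial σ R ⧸ Ideal.span (Set.range fun i => (X i ^ a i : MvPolynomial σ R))) :=
  (basisRestrictSupport R _).map (quotientSpanXPowEquiv a).symm

theorem finite_quotient_span_X_pow [Finite σ] (a : σ → ℕ) :
    Module.Finite R
      (MvPolynomial σ R ⧸ Ideal.span (Set.range fun i => (X i ^ a i : MvPolynomial σ R))) :=
  have := Finite.of_equiv _ (exponentsBelowEquivPi a).symm
  Module.Finite.of_basis (basisQuotientSpanXPow a)

theorem finrank_quotient_span_X_pow [Fintype σ] [Nontrivial R] (a : σ → ℕ) :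
    Module.finrank R
      (MvPolynomial σ R ⧸ Ideal.span (Set.range fun i => (X i ^ a i : MvPolynomial σ R))) =
      ∏ i, a i := by
  rw [Module.finrank_eq_nat_card_basis (basisQuotientSpanXPow a),
    Nat.card_congr (exponentsBelowEquivPi a), Nat.card_pi]
  simp

end CommRing

end MvPolynomial

theorem Ideal.span_range_mul_left_isUnit {α ι : Type*} [CommSemiring α] {u : ι → α}
    (hu : ∀ i, IsUnit (u i)) (f : ι → α) :
    Ideal.span (Set.range fun i => u i * f i) = Ideal.span (Set.range f) := by
  simp only [Ideal.span_range_eq_iSup, Ideal.span_singleton_mul_left_unit (hu _)]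

theorem jacobianIdeal_blowE6_eq {m : ℕ} (hm : 1 ≤ m) {c : ℂ} (hc : c ≠ 0) :
    jacobianIdeal (X 1 ^ 3 + X 2 ^ 4 + C c * X 0 ^ m) =
      Ideal.span (Set.range fun i => X i ^ ![m - 1, 2, 3] i) := by
  have hpderiv : (fun i => pderiv i (X 1 ^ 3 + X 2 ^ 4 + C c * X 0 ^ m)) =
      fun i => C (![c * m, 3, 4] i) * X i ^ ![m - 1, 2, 3] i := by
    funext i
    fin_cases i <;> simp [map_ofNat, mul_assoc]
  rw [jacobianIdeal, hpderiv, Ideal.span_range_mul_left_isUnit]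
  intro i
  refine (Ne.isUnit ?_).map C
  fin_cases i <;> simp [hc]
  omega

/-- The blow-`E₆` model `x₂³ + x₃⁴ + c·x₁^m` of blow-order `m` has Milnor
number `6·(m-1)`. -/
theorem milnor_number_blow_E6 (m : ℕ) (hm : 1 ≤ m) (c : ℂ) (hc : c ≠ 0) :
    FiniteDimensional ℂ
      (MvPolynomial (Fin 3) ℂ ⧸ jacobianIdeal (X 1 ^ 3 + X 2 ^ 4 + C c * X 0 ^ m)) ∧
    Module.finrank ℂ
      (MvPolynomial (Fin 3) ℂ ⧸ jacobianIdeal (X 1 ^ 3 + X 2 ^ 4 + C c * X 0 ^ m)) =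
      6 * (m - 1) := by
  rw [jacobianIdeal_blowE6_eq hm hc]
  refine ⟨finite_quotient_span_X_pow _, ?_⟩
  rw [finrank_quotient_span_X_pow, Fin.prod_univ_three]
  simp only [Matrix.cons_val_zero, Matrix.cons_val_one, Matrix.cons_val_two, Matrix.head_cons,
    Matrix.tail_cons]
  ring
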